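/- Let G be a finite simple graph, let X ⊆ V(G) be such that the induced subgraph G \ X is a connected threshold graph on at least two vertices, and let p be the minimum number of colors in a coloring c : V(G) → S such that for every x ∈ X some color is assigned to exactly one vertex of N(x). Then p ≤ χcf(G) ≤ p + 2. -/

import Mathlib

/-- A coloring `c` is a conflict-free open neighborhood (CF-ON) coloring of `H` if
for every vertex `v` there is some color assigned to exactly one vertex of the
open neighborhood `N(v)`. -/
def IsCFON {W S : Type*} (H : SimpleGraph W) (c : W → S) : Prop :=
  ∀ v : W, ∃ a : S, ∃! u : W, H.Adj v u ∧ c u = a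

/-- A graph is a threshold graph if it can be built from the empty graph by repeatedly
adding either an isolated vertex or a universal vertex: there is an ordering of the
vertices in which every vertex is adjacent to all, or to none, of the earlier ones. -/
def IsThresholdGraph {W : Type*} (H : SimpleGraph W) : Prop :=
  ∃ (n : ℕ) (e : Fin n ≃ W), ∀ i : Fin n,
    (∀ j : Fin n, j < i → H.Adj (e j) (e i)) ∨ (∀ j : Fin n, j < i → ¬ H.Adj (e j) (e i))

/-!
Recolour a dominating vertex `u` of the threshold part and one neighbour `w` of it with two fresh
colours, each used exactly once. Every vertex outside `X` sees `u` or `w`, hence sees a unique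
colour; a vertex of `X` that sees neither `u` nor `w` keeps the uniquely coloured neighbour it had.
So `k` colours serving `X` give `k + 2` colours serving everything, and conversely every CF-ON
colouring serves `X`.
-/

def IsCFONAt {W S : Type*} (H : SimpleGraph W) (c : W → S) (v : W) : Prop :=
  ∃ a : S, ∃! u : W, H.Adj v u ∧ c u = a

namespace IsCFONAt

variable {W S T : Type*} {H : SimpleGraph W} {v : W}

theorem of_adj_of_forall_eq {c : W → S} {y : W} (hy : H.Adj v y)
    (hc : ∀ z, c z = c y → z = y) : IsCFONAt H c v :=
  ⟨c y, y, ⟨hy, rfl⟩, fun z hz => hc z hz.2⟩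

theorem of_eq_comp_on_neighbors {c : W → S} {d : W → T} {f : S → T} (h : IsCFONAt H c v)
    (hf : Function.Injective f) (hd : ∀ y, H.Adj v y → d y = f (c y)) : IsCFONAt H d v := by
  obtain ⟨a, y, ⟨hy, rfl⟩, huniq⟩ := h
  refine ⟨f (c y), y, ⟨hy, hd y hy⟩, fun z ⟨hz, hzy⟩ => huniq z ⟨hz, hf ?_⟩⟩
  rw [← hd z hz, hzy]

end IsCFONAt

theorem IsCFON.comp_injective {W S T : Type*} {H : SimpleGraph W} {c : W → S} (h : IsCFON H c)
    {f : S → T} (hf : Function.Injective f) : IsCFON H (f ∘ c) :=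
  fun v => IsCFONAt.of_eq_comp_on_neighbors (h v) hf fun _ _ => rfl

theorem SimpleGraph.Preconnected.exists_adj_of_ne {W : Type*} {H : SimpleGraph W}
    (hH : H.Preconnected) {u v : W} (huv : u ≠ v) : ∃ w, H.Adj u w := by
  obtain ⟨p⟩ := hH u v
  exact ⟨p.snd, p.adj_snd (p.not_nil_of_ne huv)⟩

theorem IsThresholdGraph.exists_adj_all_or_adj_none {W : Type*} [Nonempty W] {H : SimpleGraph W}
    (hH : IsThresholdGraph H) : ∃ u, (∀ v, v ≠ u → H.Adj u v) ∨ (∀ v, v ≠ u → ¬ H.Adj u v) := by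
  obtain ⟨n, e, he⟩ := hH
  cases n with
  | zero => exact (e.symm (Classical.arbitrary W)).elim0
  | succ m =>
    have hlt : ∀ v, v ≠ e (Fin.last m) → e.symm v < Fin.last m := fun v hv =>
      Fin.lt_last_iff_ne_last.mpr fun h => hv (by rw [← h, Equiv.apply_symm_apply])
    refine ⟨e (Fin.last m), (he (Fin.last m)).imp (fun hall v hv => ?_) (fun hnone v hv => ?_)⟩
    · simpa using (hall _ (hlt v hv)).symm
    · simpa [H.adj_comm] using hnone _ (hlt v hv)

theorem IsThresholdGraph.exists_adj_all {W : Type*} {H : SimpleGraph W} (hH : IsThresholdGraph H)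
    (hconn : H.Connected) : ∃ u, ∀ v, v ≠ u → H.Adj u v := by
  have := hconn.nonempty
  obtain ⟨u, hall | hnone⟩ := hH.exists_adj_all_or_adj_none
  · exact ⟨u, hall⟩
  · refine ⟨u, fun v hv => ?_⟩
    obtain ⟨w, huw⟩ := hconn.preconnected.exists_adj_of_ne hv.symm
    exact absurd huw (hnone w (H.ne_of_adj huw).symm)

theorem exists_isCFON_of_adj_or_adj {V S : Type*} [DecidableEq V] {G : SimpleGraph V} {X : Set V}
    {c : V → S} (hc : ∀ x ∈ X, IsCFONAt G c x) {u w : V} (huw : u ≠ w)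
    (hdom : ∀ v, v ∉ X → G.Adj v u ∨ G.Adj v w) : ∃ c' : V → S ⊕ Fin 2, IsCFON G c' := by
  let c' : V → S ⊕ Fin 2 := fun v =>
    if v = u then .inr 0 else if v = w then .inr 1 else .inl (c v)
  have hc'u : ∀ z, c' z = c' u → z = u := by
    intro z; by_cases hzu : z = u <;> by_cases hzw : z = w <;> simp [c', hzu, hzw]
  have hc'w : ∀ z, c' z = c' w → z = w := by
    intro z; by_cases hzu : z = u <;> by_cases hzw : z = w <;> simp [c', hzu, hzw, huw.symm]
  refine ⟨c', fun v => show IsCFONAt G c' v from ?_⟩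
  by_cases hvu : G.Adj v u
  · exact .of_adj_of_forall_eq hvu hc'u
  by_cases hvw : G.Adj v w
  · exact .of_adj_of_forall_eq hvw hc'w
  have hvX : v ∈ X := by_contra fun hvX => (hdom v hvX).elim hvu hvw
  refine (hc v hvX).of_eq_comp_on_neighbors Sum.inl_injective fun y hy => ?_
  have hyu : y ≠ u := fun h => hvu (h ▸ hy)
  have hyw : y ≠ w := fun h => hvw (h ▸ hy)
  simp [c', hyu, hyw]

theorem Nat.sInf_le_sInf_and_sInf_le_sInf_add {P Q : Set ℕ} {m : ℕ} (hQP : Q ⊆ P)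
    (hPQ : ∀ k ∈ P, k + m ∈ Q) : sInf P ≤ sInf Q ∧ sInf Q ≤ sInf P + m := by
  rcases P.eq_empty_or_nonempty with rfl | hP
  · simp [Set.subset_empty_iff.mp hQP]
  · have hQ : Q.Nonempty := ⟨_, hPQ _ (Nat.sInf_mem hP)⟩
    exact ⟨Nat.sInf_le (hQP (Nat.sInf_mem hQ)), Nat.sInf_le (hPQ _ (Nat.sInf_mem hP))⟩

theorem cfon_dist_to_threshold_general {V : Type*} (G : SimpleGraph V) (X : Set V)
    (hthr : IsThresholdGraph (G.induce Xᶜ))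
    (hconn : (G.induce Xᶜ).Connected)
    (hcard : ∃ u v : V, u ∉ X ∧ v ∉ X ∧ u ≠ v)
    (p q : ℕ)
    (hp : p = sInf {k : ℕ | ∃ c : V → Fin k, ∀ x ∈ X,
      ∃ a : Fin k, ∃! u : V, G.Adj x u ∧ c u = a})
    (hq : q = sInf {k : ℕ | ∃ c : V → Fin k, IsCFON G c}) :
    p ≤ q ∧ q ≤ p + 2 := by
  classical
  obtain ⟨⟨u, hu⟩, hudom⟩ := hthr.exists_adj_all hconn
  obtain ⟨w, hw, hwu⟩ : ∃ w, w ∉ X ∧ w ≠ u := by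
    obtain ⟨a, b, ha, hb, hab⟩ := hcard
    by_cases hau : a = u
    exacts [⟨b, hb, hau ▸ hab.symm⟩, ⟨a, ha, hau⟩]
  have hdom : ∀ v, v ∉ X → G.Adj v u ∨ G.Adj v w := fun v hv => by
    by_cases hvu : v = u
    · exact .inr (hvu ▸ (hudom ⟨w, hw⟩ (by simpa using hwu) : G.Adj u w))
    · exact .inl (hudom ⟨v, hv⟩ (by simpa using hvu) : G.Adj u v).symm
  subst hp hq
  refine Nat.sInf_le_sInf_and_sInf_le_sInf_add (fun k ⟨c, hc⟩ => ⟨c, fun x _ => hc x⟩) ?_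
  rintro k ⟨c, hc⟩
  obtain ⟨c', hc'⟩ := exists_isCFON_of_adj_or_adj hc hwu.symm hdom
  exact ⟨finSumFinEquiv ∘ c', hc'.comp_injective finSumFinEquiv.injective⟩

/-- If `G \ X` is a connected threshold graph on at least two vertices and `p` is the
minimum number of colors in a coloring of `G` such that every `x ∈ X` has a uniquely
colored vertex in its open neighborhood, then `p ≤ χcf(G) ≤ p + 2`. -/
theorem cfon_dist_to_threshold {V : Type*} [Fintype V] (G : SimpleGraph V) (X : Set V)
    (hthr : IsThresholdGraph (G.induce Xᶜ))
    (hconn : (G.induce Xᶜ).Connected)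
    (hcard : ∃ u v : V, u ∉ X ∧ v ∉ X ∧ u ≠ v)
    (p q : ℕ)
    (hp : p = sInf {k : ℕ | ∃ c : V → Fin k, ∀ x ∈ X,
      ∃ a : Fin k, ∃! u : V, G.Adj x u ∧ c u = a})
    (hq : q = sInf {k : ℕ | ∃ c : V → Fin k, IsCFON G c}) :
    p ≤ q ∧ q ≤ p + 2 :=
  cfon_dist_to_threshold_general G X hthr hconn hcard p q hp hq
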